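/- Let 𝒜 : ℝ^{n×n} → ℝ^m satisfy 6r-RIP with constant δ_{6r} ≤ 1/10, let X ∈ ℝ^{n×r}, and define ∇f(U) := Σ_{k=1}^m ⟨A_k, UUᵀ − XXᵀ⟩ A_k U. Then for all U ∈ ℝ^{n×r}, ‖U‖_{op}²·‖UUᵀ − XXᵀ‖_F² ≥ (10/17)·‖∇f(U)‖_F². -/

import Mathlib

/-!
Write `E = UUᵀ - XXᵀ` and `G = ∇f(U)`. Moving `U` across the Frobenius inner product gives
`‖G‖² = Σ_k ⟨A_k, E⟩⟨A_k, GUᵀ⟩`. Every combination `aE + bGUᵀ` factors through `3r` columns,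
so RIP and polarization bound this sum by `(1 + δ)‖E‖‖GUᵀ‖ ≤ (11/10)‖E‖‖U‖_op‖G‖`.
Hence `‖G‖ ≤ (11/10)‖U‖_op‖E‖`, and `(11/10)² · 10/17 < 1`.
-/

open Matrix

noncomputable def vnorm {ι : Type*} [Fintype ι] (v : ι → ℝ) : ℝ :=
  Real.sqrt (∑ i, v i ^ 2)

noncomputable def frob {α β : Type*} [Fintype α] [Fintype β] (M : Matrix α β ℝ) : ℝ :=
  Real.sqrt (∑ i, ∑ j, M i j ^ 2)

noncomputable def sval {α β : Type*} [Fintype α] [Fintype β] (M : Matrix α β ℝ) (k : ℕ) : ℝ :=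
  sSup { t : ℝ | ∃ V : Submodule ℝ (β → ℝ), Module.finrank ℝ V = k ∧
    ∀ v ∈ V, t * vnorm v ≤ vnorm (M.mulVec v) }

noncomputable def opNorm {α β : Type*} [Fintype α] [Fintype β] (M : Matrix α β ℝ) : ℝ :=
  sval M 1

noncomputable def pdist {α ρ : Type*} [Fintype α] [Fintype ρ] [DecidableEq ρ]
    (U X : Matrix α ρ ℝ) : ℝ :=
  sInf { d : ℝ | ∃ R : Matrix ρ ρ ℝ, Rᵀ * R = 1 ∧ d = frob (U - X * R) }

noncomputable def mip {α β : Type*} [Fintype α] [Fintype β] (A B : Matrix α β ℝ) : ℝ :=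
  ∑ i, ∑ j, A i j * B i j

noncomputable def mapA {m : ℕ} {α β : Type*} [Fintype α] [Fintype β]
    (A : Fin m → Matrix α β ℝ) (Z : Matrix α β ℝ) : Fin m → ℝ :=
  fun k => mip (A k) Z

def HasRIP {m n₁ n₂ : ℕ} (A : Fin m → Matrix (Fin n₁) (Fin n₂) ℝ) (s : ℕ) (δ : ℝ) : Prop :=
  ∀ Z : Matrix (Fin n₁) (Fin n₂) ℝ, Z.rank ≤ s →
    (1 - δ) * frob Z ^ 2 ≤ ∑ k, mapA A Z k ^ 2 ∧
      ∑ k, mapA A Z k ^ 2 ≤ (1 + δ) * frob Z ^ 2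

noncomputable def gradU {m n₁ n₂ r : ℕ} (A : Fin m → Matrix (Fin n₁) (Fin n₂) ℝ)
    (M : Matrix (Fin n₁) (Fin n₂) ℝ)
    (U : Matrix (Fin n₁) (Fin r) ℝ) (V : Matrix (Fin n₂) (Fin r) ℝ) :
    Matrix (Fin n₁) (Fin r) ℝ :=
  (∑ k, mip (A k) (U * Vᵀ - M) • (A k * V)) + (1 / 4 : ℝ) • (U * (Uᵀ * U - Vᵀ * V))

noncomputable def gradV {m n₁ n₂ r : ℕ} (A : Fin m → Matrix (Fin n₁) (Fin n₂) ℝ)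
    (M : Matrix (Fin n₁) (Fin n₂) ℝ)
    (U : Matrix (Fin n₁) (Fin r) ℝ) (V : Matrix (Fin n₂) (Fin r) ℝ) :
    Matrix (Fin n₂) (Fin r) ℝ :=
  (∑ k, mip (A k) (U * Vᵀ - M) • ((A k)ᵀ * U)) + (1 / 4 : ℝ) • (V * (Vᵀ * V - Uᵀ * U))

noncomputable def gradg {m n₁ n₂ r : ℕ} (A : Fin m → Matrix (Fin n₁) (Fin n₂) ℝ)
    (M : Matrix (Fin n₁) (Fin n₂) ℝ)
    (U : Matrix (Fin n₁) (Fin r) ℝ) (V : Matrix (Fin n₂) (Fin r) ℝ) :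
    Matrix (Fin n₁ ⊕ Fin n₂) (Fin r) ℝ :=
  Matrix.fromRows (gradU A M U V) (gradV A M U V)

section Frobenius
variable {α β γ : Type*}

/-- Matrices as `ℓ²(α; ℓ²(β))`: `frob` and `mip` become the norm and inner product there
(`frob_eq_norm_toL2`, `mip_eq_inner_toL2`), so the Frobenius geometry comes from Mathlib. -/
def toL2 : Matrix α β ℝ →ₗ[ℝ] PiLp 2 (fun _ : α => EuclideanSpace ℝ β) where
  toFun M := WithLp.toLp 2 fun i => WithLp.toLp 2 (M i)
  map_add' _ _ := rfl
  map_smul' _ _ := rfl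

@[simp]
lemma ofLp_toL2_apply (M : Matrix α β ℝ) (i : α) : (toL2 M).ofLp i = WithLp.toLp 2 (M i) := rfl

variable [Fintype α] [Fintype β] [Fintype γ]

lemma frob_nonneg (M : Matrix α β ℝ) : 0 ≤ frob M := Real.sqrt_nonneg _

lemma vnorm_eq_norm (v : β → ℝ) : vnorm v = ‖(WithLp.toLp 2 v : EuclideanSpace ℝ β)‖ := by
  simp [vnorm, EuclideanSpace.norm_eq]

lemma vnorm_smul (c : ℝ) (v : β → ℝ) : vnorm (c • v) = |c| * vnorm v := by
  rw [vnorm_eq_norm, vnorm_eq_norm, WithLp.toLp_smul, norm_smul, Real.norm_eq_abs]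

lemma vnorm_pos {v : β → ℝ} (hv : v ≠ 0) : 0 < vnorm v := by
  rw [vnorm_eq_norm, norm_pos_iff]
  exact (WithLp.toLp_injective 2).ne hv

lemma frob_sq_eq_sum_vnorm_sq (M : Matrix α β ℝ) : frob M ^ 2 = ∑ i, vnorm (M i) ^ 2 := by
  simp only [frob, vnorm]
  rw [Real.sq_sqrt (by positivity)]
  exact Finset.sum_congr rfl fun i _ => (Real.sq_sqrt (by positivity)).symm

lemma frob_eq_norm_toL2 (M : Matrix α β ℝ) : frob M = ‖toL2 M‖ := by
  have h : ∑ i, ‖(toL2 M).ofLp i‖ ^ 2 = frob M ^ 2 := by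
    simp [frob_sq_eq_sum_vnorm_sq, vnorm_eq_norm]
  rw [PiLp.norm_eq_of_L2, h, Real.sqrt_sq (frob_nonneg M)]

lemma mip_eq_inner_toL2 (M N : Matrix α β ℝ) : mip M N = inner ℝ (toL2 M) (toL2 N) := by
  simp [mip, PiLp.inner_apply, mul_comm]

lemma mip_self (M : Matrix α β ℝ) : mip M M = frob M ^ 2 := by
  rw [mip_eq_inner_toL2, frob_eq_norm_toL2, real_inner_self_eq_norm_sq]

lemma mip_le_frob_mul_frob (M N : Matrix α β ℝ) : mip M N ≤ frob M * frob N := by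
  rw [mip_eq_inner_toL2, frob_eq_norm_toL2, frob_eq_norm_toL2]
  exact real_inner_le_norm _ _

lemma mip_eq_zero_of_frob_eq_zero (M : Matrix α β ℝ) {N : Matrix α β ℝ} (hN : frob N = 0) :
    mip M N = 0 := by
  rw [frob_eq_norm_toL2, norm_eq_zero] at hN
  rw [mip_eq_inner_toL2, hN, inner_zero_right]

lemma mip_add_right (M N N' : Matrix α β ℝ) : mip M (N + N') = mip M N + mip M N' := by
  simp only [mip_eq_inner_toL2, map_add, inner_add_right]

lemma mip_sub_right (M N N' : Matrix α β ℝ) : mip M (N - N') = mip M N - mip M N' := by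
  simp only [mip_eq_inner_toL2, map_sub, inner_sub_right]

lemma mip_smul_left (c : ℝ) (M N : Matrix α β ℝ) : mip (c • M) N = c * mip M N := by
  simp only [mip_eq_inner_toL2, map_smul, real_inner_smul_left]

lemma mip_smul_right (c : ℝ) (M N : Matrix α β ℝ) : mip M (c • N) = c * mip M N := by
  simp only [mip_eq_inner_toL2, map_smul, real_inner_smul_right]

lemma mip_sum_left {ι : Type*} (s : Finset ι) (M : ι → Matrix α β ℝ) (N : Matrix α β ℝ) :
    mip (∑ k ∈ s, M k) N = ∑ k ∈ s, mip (M k) N := by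
  simp only [mip_eq_inner_toL2, map_sum, sum_inner]

lemma frob_smul (c : ℝ) (M : Matrix α β ℝ) : frob (c • M) = |c| * frob M := by
  rw [frob_eq_norm_toL2, frob_eq_norm_toL2, map_smul, norm_smul, Real.norm_eq_abs]

lemma frob_add_sq (M N : Matrix α β ℝ) :
    frob (M + N) ^ 2 = frob M ^ 2 + 2 * mip M N + frob N ^ 2 := by
  simp only [frob_eq_norm_toL2, mip_eq_inner_toL2, map_add, norm_add_sq_real]

lemma frob_sub_sq (M N : Matrix α β ℝ) :
    frob (M - N) ^ 2 = frob M ^ 2 - 2 * mip M N + frob N ^ 2 := by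
  simp only [frob_eq_norm_toL2, mip_eq_inner_toL2, map_sub, norm_sub_sq_real]

lemma mip_mul_left (M : Matrix α β ℝ) (C : Matrix β γ ℝ) (N : Matrix α γ ℝ) :
    mip (M * C) N = mip M (N * Cᵀ) := by
  simp only [mip, Matrix.mul_apply, Matrix.transpose_apply, Finset.sum_mul, Finset.mul_sum]
  refine Finset.sum_congr rfl fun i _ => ?_
  rw [Finset.sum_comm]
  exact Finset.sum_congr rfl fun j _ => Finset.sum_congr rfl fun l _ => by ring

lemma exists_vnorm_mulVec_le (U : Matrix α β ℝ) :
    ∃ C, ∀ v, vnorm (U *ᵥ v) ≤ C * vnorm v := by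
  classical
  let T := LinearMap.toContinuousLinearMap (Matrix.toEuclideanLin U)
  refine ⟨‖T‖, fun v => ?_⟩
  simpa [vnorm_eq_norm, T, Matrix.toLpLin_toLp] using T.le_opNorm (WithLp.toLp 2 v)

lemma vnorm_mulVec_le_opNorm_mul (U : Matrix α β ℝ) (v : β → ℝ) :
    vnorm (U *ᵥ v) ≤ opNorm U * vnorm v := by
  rcases eq_or_ne v 0 with rfl | hv
  · simp [vnorm]
  obtain ⟨C, hC⟩ := exists_vnorm_mulVec_le U
  rw [opNorm, sval, ← div_le_iff₀ (vnorm_pos hv)]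
  refine le_csSup ⟨C, fun t ⟨V, hV, ht⟩ => ?_⟩ ⟨Submodule.span ℝ {v}, finrank_span_singleton hv, ?_⟩
  · obtain ⟨w, hwV, hw⟩ :=
      Submodule.exists_mem_ne_zero_of_ne_bot (Submodule.one_le_finrank_iff.mp hV.ge)
    exact le_of_mul_le_mul_right ((ht w hwV).trans (hC w)) (vnorm_pos hw)
  · rintro _ hw
    obtain ⟨c, rfl⟩ := Submodule.mem_span_singleton.mp hw
    rw [Matrix.mulVec_smul, vnorm_smul, vnorm_smul]
    exact le_of_eq (by field_simp [(vnorm_pos hv).ne'])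

lemma frob_mul_transpose_sq_le (G : Matrix γ β ℝ) (U : Matrix α β ℝ) :
    frob (G * Uᵀ) ^ 2 ≤ opNorm U ^ 2 * frob G ^ 2 := by
  rw [frob_sq_eq_sum_vnorm_sq, frob_sq_eq_sum_vnorm_sq, Finset.mul_sum]
  refine Finset.sum_le_sum fun i _ => ?_
  have hrow : (G * Uᵀ) i = U *ᵥ G i := by
    ext j
    simp [Matrix.mul_apply, Matrix.mulVec, dotProduct, mul_comm]
  rw [hrow, ← mul_pow]
  exact pow_le_pow_left₀ (Real.sqrt_nonneg _) (vnorm_mulVec_le_opNorm_mul U (G i)) 2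

end Frobenius

lemma rank_mul_add_mul_add_mul_le {α ρ : Type*} [Fintype α] [Fintype ρ]
    (P Q W : Matrix α ρ ℝ) (P' Q' W' : Matrix ρ α ℝ) :
    (P * P' + Q * Q' + W * W').rank ≤ 3 * Fintype.card ρ := by
  rw [add_assoc, ← Matrix.fromCols_mul_fromRows, ← Matrix.fromCols_mul_fromRows]
  refine (Matrix.rank_mul_le_left _ _).trans ((Matrix.rank_le_card_width _).trans ?_)
  simp only [Fintype.card_sum]
  omega

section RIP
variable {m n₁ n₂ s : ℕ} {A : Fin m → Matrix (Fin n₁) (Fin n₂) ℝ} {δ : ℝ}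

lemma HasRIP.sum_mip_mul_le_add (hRIP : HasRIP A s δ) {Y Z : Matrix (Fin n₁) (Fin n₂) ℝ}
    (hadd : (Y + Z).rank ≤ s) (hsub : (Y - Z).rank ≤ s) :
    ∑ k, mip (A k) Y * mip (A k) Z ≤ mip Y Z + δ / 2 * (frob Y ^ 2 + frob Z ^ 2) := by
  obtain ⟨-, hupper⟩ := hRIP _ hadd
  obtain ⟨hlower, -⟩ := hRIP _ hsub
  have polarization : ∑ k, mapA A (Y + Z) k ^ 2 - ∑ k, mapA A (Y - Z) k ^ 2 =
      4 * ∑ k, mip (A k) Y * mip (A k) Z := by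
    simp only [mapA, mip_add_right, mip_sub_right, ← Finset.sum_sub_distrib, Finset.mul_sum]
    exact Finset.sum_congr rfl fun k _ => by ring
  rw [frob_add_sq] at hupper
  rw [frob_sub_sq] at hlower
  linarith

lemma HasRIP.sum_mip_mul_le (hRIP : HasRIP A s δ) {Y Z : Matrix (Fin n₁) (Fin n₂) ℝ}
    (hrank : ∀ a b : ℝ, (a • Y + b • Z).rank ≤ s) :
    ∑ k, mip (A k) Y * mip (A k) Z ≤ (1 + δ) * frob Y * frob Z := by
  rcases (mul_nonneg (frob_nonneg Y) (frob_nonneg Z)).eq_or_lt with h0 | hpos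
  · rcases mul_eq_zero.mp h0.symm with hY | hZ
    · simp [mip_eq_zero_of_frob_eq_zero _ hY, hY]
    · simp [mip_eq_zero_of_frob_eq_zero _ hZ, hZ]
  -- polarization for the pair rescaled to equal norms `‖Y‖‖Z‖`
  have h := hRIP.sum_mip_mul_le_add (Y := frob Z • Y) (Z := frob Y • Z)
    (hrank _ _) (by simpa [sub_eq_add_neg] using hrank (frob Z) (-frob Y))
  simp only [mip_smul_left, mip_smul_right, frob_smul, abs_of_nonneg (frob_nonneg _)] at h
  have hYZ := mip_le_frob_mul_frob Y Z
  have hsum : ∑ k, frob Z * mip (A k) Y * (frob Y * mip (A k) Z) =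
      frob Y * frob Z * ∑ k, mip (A k) Y * mip (A k) Z := by
    rw [Finset.mul_sum]
    exact Finset.sum_congr rfl fun k _ => by ring
  refine le_of_mul_le_mul_left ?_ hpos
  nlinarith [mul_le_mul_of_nonneg_left hYZ hpos.le]

end RIP

/-- The paper's `∇f(U)`. -/
noncomputable def gradSym {m n r : ℕ} (A : Fin m → Matrix (Fin n) (Fin n) ℝ)
    (X U : Matrix (Fin n) (Fin r) ℝ) : Matrix (Fin n) (Fin r) ℝ :=
  ∑ k, mip (A k) (U * Uᵀ - X * Xᵀ) • (A k * U)

lemma frob_gradSym_sq {m n r : ℕ} (A : Fin m → Matrix (Fin n) (Fin n) ℝ)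
    (X U : Matrix (Fin n) (Fin r) ℝ) :
    frob (gradSym A X U) ^ 2 =
      ∑ k, mip (A k) (U * Uᵀ - X * Xᵀ) * mip (A k) (gradSym A X U * Uᵀ) := by
  set G := gradSym A X U
  calc frob G ^ 2 = mip G G := (mip_self G).symm
    _ = ∑ k, mip (mip (A k) (U * Uᵀ - X * Xᵀ) • (A k * U)) G := mip_sum_left _ _ _
    _ = _ := by simp only [mip_smul_left, mip_mul_left]

lemma HasRIP.frob_gradSym_sq_le {m n r : ℕ} {A : Fin m → Matrix (Fin n) (Fin n) ℝ} {δ : ℝ}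
    (hRIP : HasRIP A (6 * r) δ) (X U : Matrix (Fin n) (Fin r) ℝ) :
    frob (gradSym A X U) ^ 2 ≤
      (1 + δ) * frob (U * Uᵀ - X * Xᵀ) * frob (gradSym A X U * Uᵀ) := by
  set G := gradSym A X U
  have hrank (a b : ℝ) : (a • (U * Uᵀ - X * Xᵀ) + b • (G * Uᵀ)).rank ≤ 6 * r := by
    have h : a • (U * Uᵀ - X * Xᵀ) + b • (G * Uᵀ) =
        (a • U) * Uᵀ + (-a • X) * Xᵀ + (b • G) * Uᵀ := by
      simp only [smul_sub, Matrix.smul_mul, neg_smul, Matrix.neg_mul]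
      abel
    rw [h]
    exact (rank_mul_add_mul_add_mul_le _ _ _ _ _ _).trans (by rw [Fintype.card_fin]; omega)
  rw [frob_gradSym_sq]
  exact hRIP.sum_mip_mul_le hrank

/-- Lipschitz gradient bound around the optimum. -/
theorem lipschitz_gradient_bound {n r m : ℕ}
    (A : Fin m → Matrix (Fin n) (Fin n) ℝ) (δ : ℝ)
    (hRIP : HasRIP A (6 * r) δ) (hδ : δ ≤ 1 / 10)
    (X : Matrix (Fin n) (Fin r) ℝ) :
    ∀ U : Matrix (Fin n) (Fin r) ℝ,
      opNorm U ^ 2 * frob (U * Uᵀ - X * Xᵀ) ^ 2 ≥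
        (10 / 17) * frob (∑ k, mip (A k) (U * Uᵀ - X * Xᵀ) • (A k * U)) ^ 2 := by
  intro U
  change _ ≥ _ * frob (gradSym A X U) ^ 2
  set G := gradSym A X U
  set e := frob (U * Uᵀ - X * Xᵀ)
  have he : 0 ≤ e := frob_nonneg _
  have hGW : frob G ^ 2 ≤ 11 / 10 * e * frob (G * Uᵀ) :=
    (hRIP.frob_gradSym_sq_le X U).trans (by gcongr; exacts [frob_nonneg _, by linarith])
  have hG4 : (frob G ^ 2) ^ 2 ≤ (121 / 100 * e ^ 2 * opNorm U ^ 2) * frob G ^ 2 :=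
    calc (frob G ^ 2) ^ 2 ≤ (11 / 10 * e * frob (G * Uᵀ)) ^ 2 := by gcongr
      _ = 121 / 100 * e ^ 2 * frob (G * Uᵀ) ^ 2 := by ring
      _ ≤ 121 / 100 * e ^ 2 * (opNorm U ^ 2 * frob G ^ 2) := by
          gcongr; exact frob_mul_transpose_sq_le G U
      _ = (121 / 100 * e ^ 2 * opNorm U ^ 2) * frob G ^ 2 := by ring
  have hG2 : frob G ^ 2 ≤ 121 / 100 * e ^ 2 * opNorm U ^ 2 := by
    rcases (sq_nonneg (frob G)).eq_or_lt with h0 | hpos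
    · rw [← h0]; positivity
    · exact le_of_mul_le_mul_right (by nlinarith) hpos
  nlinarith [sq_nonneg (e * opNorm U)]
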